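/- arXiv:0808.0149 — 6 statements merged into one kernel-verified Lean document; each statement's English description precedes it below -/
import Mathlib

section
/- Let R be a commutative ring and n a positive natural number. Every R-linear derivation D on the matrix ring M_n(R) (where R acts via scalar matrices, i.e., D(λ·x) = λ·D(x) for all λ ∈ R, x ∈ M_n(R)) is inner: there exists a ∈ M_n(R) such that D(x) = ax − xa for all x ∈ M_n(R). (This is the instance of the paper's Theorem 2.1 for a homogeneous type I_n von Neumann algebra, whose algebra of locally measurable operators is the matrix algebra over its commutative center.) -/
/-!
Write `e i j` for the matrix units and fix an index `z`; put `a = ∑ k, D (e k z) * e z k`.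
Since `1 = ∑ k, e k z * e z k`, the Leibniz rule gives
`D x = ∑ k, D (x * e k z) * e z k - x * a`, and because `x * e k z = ∑ i, x i k • e i z`,
`R`-linearity turns the first sum into `a * x`.
-/

namespace Matrix

variable {ι R : Type*} [Fintype ι] [DecidableEq ι] [CommRing R]

omit [Fintype ι] in
theorem single_eq_smul_single_one (i j : ι) (c : R) : single i j c = c • single i j 1 := by
  rw [smul_single, smul_eq_mul, mul_one]

theorem mul_single_one_eq_sum (x : Matrix ι ι R) (k z : ι) :
    x * single k z 1 = ∑ i, single i z (x i k) := by
  conv_lhs => rw [← one_mul x, ← sum_single_one, Finset.sum_mul, Finset.sum_mul]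
  simp

theorem single_one_mul_eq_sum (x : Matrix ι ι R) (z i : ι) :
    single z i 1 * x = ∑ k, single z k (x i k) := by
  conv_lhs => rw [← mul_one (single z i 1 * x), ← sum_single_one, Finset.mul_sum]
  simp

theorem sum_single_mul_single_eq_one (z : ι) :
    ∑ k, single k z (1 : R) * single z k 1 = 1 := by
  simpa using sum_single_one (m := ι) (α := R)

theorem sum_map_mul_single_mul_single (D : Matrix ι ι R →ₗ[R] Matrix ι ι R)
    (x : Matrix ι ι R) (z : ι) :
    ∑ k, D (x * single k z 1) * single z k 1 = (∑ i, D (single i z 1) * single z i 1) * x := by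
  have hterm (i k : ι) :
      D (single i z (x i k)) * single z k 1 = D (single i z 1) * single z k (x i k) := by
    rw [single_eq_smul_single_one i z, single_eq_smul_single_one z k (x i k), map_smul,
      smul_mul_assoc, mul_smul_comm]
  calc ∑ k, D (x * single k z 1) * single z k 1
      = ∑ k, ∑ i, D (single i z 1) * single z k (x i k) := by
        simp only [mul_single_one_eq_sum x, map_sum, Finset.sum_mul, hterm]
    _ = ∑ i, D (single i z 1) * (single z i 1 * x) := by
        simp only [single_one_mul_eq_sum, Finset.mul_sum]
        exact Finset.sum_comm
    _ = (∑ i, D (single i z 1) * single z i 1) * x := by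
        simp only [Finset.sum_mul, mul_assoc]

theorem map_eq_commutator_of_leibniz (D : Matrix ι ι R →ₗ[R] Matrix ι ι R)
    (hD : ∀ x y, D (x * y) = D x * y + x * D y) (z : ι) (x : Matrix ι ι R) :
    D x = (∑ i, D (single i z 1) * single z i 1) * x
      - x * ∑ i, D (single i z 1) * single z i 1 := by
  rw [← sum_map_mul_single_mul_single]
  calc D x = ∑ k, D x * single k z 1 * single z k 1 := by
        simp only [mul_assoc, ← Finset.mul_sum, sum_single_mul_single_eq_one, mul_one]
    _ = ∑ k, (D (x * single k z 1) - x * D (single k z 1)) * single z k 1 := by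
        simp only [hD, add_sub_cancel_right]
    _ = _ := by simp only [sub_mul, Finset.sum_sub_distrib, Finset.mul_sum, mul_assoc]

end Matrix

/-- every `R`-linear derivation on the matrix ring `M_n(R)` over a
commutative ring `R` (with `R` acting via scalar matrices) is inner. -/
theorem linear_derivation_on_matrix_ring_is_inner {R : Type*} [CommRing R]
    (n : ℕ) (hn : 0 < n)
    (D : Matrix (Fin n) (Fin n) R → Matrix (Fin n) (Fin n) R)
    (hadd : ∀ x y : Matrix (Fin n) (Fin n) R, D (x + y) = D x + D y)
    (hleib : ∀ x y : Matrix (Fin n) (Fin n) R, D (x * y) = D x * y + x * D y)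
    (hlin : ∀ (lam : R) (x : Matrix (Fin n) (Fin n) R), D (lam • x) = lam • D x) :
    ∃ a : Matrix (Fin n) (Fin n) R, ∀ x : Matrix (Fin n) (Fin n) R,
      D x = a * x - x * a :=
  ⟨_, Matrix.map_eq_commutator_of_leibniz ⟨⟨D, hadd⟩, hlin⟩ hleib ⟨0, hn⟩⟩
end

section
/- Let (Ω, Σ, μ) be a σ-finite measure space, n a positive natural number, and let D be a ℂ-linear derivation on the matrix algebra M_n(L^0(Ω)) (which is *-isomorphic to the algebra LS(M) = S(M) of locally measurable operators for a homogeneous type I_n von Neumann algebra M with center L^∞(Ω)). Then D admits a representation D = D_a + D_δ, where D_a(x) = ax − xa is the inner derivation implemented by some a ∈ M_n(L^0(Ω)) and D_δ is the entrywise derivation induced by a ℂ-linear derivation δ on L^0(Ω); moreover this representation is unique in the sense that δ is uniquely determined by D and the map D_a is uniquely determined by D. -/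
/-!
For commutative `R`, the scalar matrices form the center of `M_n(R)`, so a derivation `D` maps
them to scalar matrices and thus induces a derivation `δ` of `R`. On the matrix units `E_pq`, `D`
agrees with the inner derivation implemented by `a = ∑ₖ D(E_kz) E_zk`: the Leibniz rule applied to
`E_pq E_kz` gives `E_pq a = D(E_pz) E_zq - D(E_pq)`, while `a E_pq = D(E_pz) E_zq`. Since every
matrix is a sum of products `(r • 1) E_pq`, the two derivations `D` and `D_a + D_δ` coincide.
Inner derivations vanish on the center, so `δ`, and then `D_a = D - D_δ`, are determined by `D`.
-/

open MeasureTheory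

/-- The entrywise map on `n × n` matrices induced by a map `δ : R → R`. -/
def matrixEntrywise {R : Type*} (n : ℕ) (δ : R → R) :
    Matrix (Fin n) (Fin n) R → Matrix (Fin n) (Fin n) R :=
  fun x => Matrix.of fun i j => δ (x i j)

namespace MeasureTheory.AEEqFun

variable {α γ : Type*} [MeasurableSpace α] {μ : Measure α}
  [TopologicalSpace γ] [CommRing γ] [IsTopologicalRing γ]

noncomputable instance instCommRing : CommRing (α →ₘ[μ] γ) :=
  { instAddCommGroup, instCommMonoid with
    left_distrib := fun f g h => toGerm_injective <| by simp only [mul_toGerm, add_toGerm, mul_add]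
    right_distrib := fun f g h => toGerm_injective <| by simp only [mul_toGerm, add_toGerm, add_mul]
    zero_mul := fun f => toGerm_injective <| by simp only [mul_toGerm, zero_toGerm, zero_mul]
    mul_zero := fun f => toGerm_injective <| by simp only [mul_toGerm, zero_toGerm, mul_zero] }

end MeasureTheory.AEEqFun

namespace Matrix

variable {m R : Type*} [Fintype m]

section Ring

variable [Ring R]

theorem map_mul_eq_of_leibniz (δ : R →+ R) (hδ : ∀ f g, δ (f * g) = δ f * g + f * δ g)
    (x y : Matrix m m R) : (x * y).map δ = x.map δ * y + x * y.map δ := by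
  ext i j
  simp only [map_apply, add_apply, mul_apply, map_sum, hδ, Finset.sum_add_distrib]

def innerAddEntrywise (a : Matrix m m R) (δ : R →+ R) : Matrix m m R →+ Matrix m m R :=
  AddMonoidHom.mulLeft a - AddMonoidHom.mulRight a + δ.mapMatrix

theorem innerAddEntrywise_apply (a : Matrix m m R) (δ : R →+ R) (x : Matrix m m R) :
    innerAddEntrywise a δ x = a * x - x * a + x.map δ :=
  rfl

theorem innerAddEntrywise_leibniz (a : Matrix m m R) {δ : R →+ R}
    (hδ : ∀ f g, δ (f * g) = δ f * g + f * δ g) (x y : Matrix m m R) :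
    innerAddEntrywise a δ (x * y)
      = innerAddEntrywise a δ x * y + x * innerAddEntrywise a δ y := by
  simp only [innerAddEntrywise_apply, map_mul_eq_of_leibniz δ hδ]
  noncomm_ring

end Ring

variable [DecidableEq m]

section Ring

variable [Ring R]

theorem exists_apply_single_eq_commutator (D : Matrix m m R →+ Matrix m m R)
    (hD : ∀ x y, D (x * y) = D x * y + x * D y) (z : m) :
    ∃ a : Matrix m m R, ∀ p q, D (single p q 1) = a * single p q 1 - single p q 1 * a := by
  refine ⟨∑ k, D (single k z 1) * single z k 1, fun p q => ?_⟩
  have hright : (∑ k, D (single k z 1) * single z k 1) * single p q 1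
      = D (single p z 1) * single z q 1 := by
    rw [Finset.sum_mul, Finset.sum_eq_single p]
    · rw [Matrix.mul_assoc, single_mul_single_same, one_mul]
    · intro k _ hk
      rw [Matrix.mul_assoc, single_mul_single_of_ne (h := hk), Matrix.mul_zero]
    · simp
  have hleft : single p q 1 * ∑ k, D (single k z 1) * single z k 1
      = D (single p z 1) * single z q 1 - D (single p q 1) := by
    have hterm : ∀ k, single p q (1 : R) * D (single k z 1)
        = D (single p q 1 * single k z 1) - D (single p q 1) * single k z 1 :=
      fun k => eq_sub_of_add_eq' (hD _ _).symm
    simp_rw [Finset.mul_sum, ← Matrix.mul_assoc, hterm, Matrix.sub_mul, Finset.sum_sub_distrib,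
      Matrix.mul_assoc (D (single p q 1)), single_mul_single_same, one_mul, ← Finset.mul_sum,
      sum_single_one, Matrix.mul_one]
    congr 1
    rw [Finset.sum_eq_single q]
    · rw [single_mul_single_same, one_mul]
    · intro k _ hk
      rw [single_mul_single_of_ne (h := Ne.symm hk), map_zero, Matrix.zero_mul]
    · simp
  rw [hright, hleft]
  abel

theorem eq_of_apply_single_eq_of_apply_scalar_eq {D D' : Matrix m m R →+ Matrix m m R}
    (hD : ∀ x y, D (x * y) = D x * y + x * D y) (hD' : ∀ x y, D' (x * y) = D' x * y + x * D' y)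
    (hsingle : ∀ p q, D (single p q 1) = D' (single p q 1))
    (hscalar : ∀ r, D (scalar m r) = D' (scalar m r)) : D = D' := by
  ext x : 1
  have hprod : ∀ p q, single p q (x p q) = scalar m (x p q) * single p q 1 := by
    intro p q
    ext i j
    simp [diagonal_mul, single_apply]
  rw [matrix_eq_sum_single x]
  simp only [map_sum, hprod, hD, hD', hsingle, hscalar]

theorem innerAddEntrywise_single (a : Matrix m m R) {δ : R →+ R}
    (hδ : ∀ f g, δ (f * g) = δ f * g + f * δ g) (p q : m) :
    innerAddEntrywise a δ (single p q 1) = a * single p q 1 - single p q 1 * a := by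
  have hδ1 : δ 1 = 0 := by simpa using hδ 1 1
  rw [innerAddEntrywise_apply, map_single _ _ _ δ, hδ1, single_zero, add_zero]

end Ring

section CommRing

variable [CommRing R]

theorem innerAddEntrywise_scalar (a : Matrix m m R) (δ : R →+ R) (r : R) :
    innerAddEntrywise a δ (scalar m r) = scalar m (δ r) := by
  rw [innerAddEntrywise_apply, scalar_commute r (Commute.all r), sub_self, zero_add]
  simp [scalar_apply, diagonal_map]

/-- Scalar matrices are central, so `D` maps them to matrices commuting with every matrix unit. -/
theorem apply_scalar_mem_range_scalar {D : Matrix m m R → Matrix m m R}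
    (hD : ∀ x y, D (x * y) = D x * y + x * D y) (r : R) :
    D (scalar m r) ∈ Set.range (scalar m) := by
  refine mem_range_scalar_iff_commute_single'.mpr fun p q => ?_
  have h := congrArg D (scalar_commute r (Commute.all r) (single p q 1))
  rw [hD, hD, scalar_commute r (Commute.all r) (D (single p q 1)), add_comm] at h
  exact (add_left_cancel h).symm

/-- The map `R → R` that `D` induces on the scalar matrices `R ≅ Z(M_m(R))`, read off at the
diagonal entry `(z, z)`. -/
def inducedDerivation (D : Matrix m m R →+ Matrix m m R) (z : m) : R →+ R where
  toFun r := D (scalar m r) z z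
  map_zero' := by simp
  map_add' f g := by simp only [map_add, add_apply]

theorem apply_scalar_eq_scalar_inducedDerivation {D : Matrix m m R →+ Matrix m m R}
    (hD : ∀ x y, D (x * y) = D x * y + x * D y) (z : m) (r : R) :
    D (scalar m r) = scalar m (inducedDerivation D z r) := by
  obtain ⟨s, hs⟩ := apply_scalar_mem_range_scalar hD r
  change D (scalar m r) = scalar m (D (scalar m r) z z)
  rw [← hs]
  simp

theorem inducedDerivation_leibniz {D : Matrix m m R →+ Matrix m m R}
    (hD : ∀ x y, D (x * y) = D x * y + x * D y) (z : m) (f g : R) :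
    inducedDerivation D z (f * g)
      = inducedDerivation D z f * g + f * inducedDerivation D z g := by
  have h := congrArg (· z z) (hD (scalar m f) (scalar m g))
  rw [← map_mul, apply_scalar_eq_scalar_inducedDerivation hD z,
    apply_scalar_eq_scalar_inducedDerivation hD z f,
    apply_scalar_eq_scalar_inducedDerivation hD z g] at h
  simpa using h

theorem inducedDerivation_smul {K : Type*} [SMulZeroClass K R] {D : Matrix m m R →+ Matrix m m R}
    (hD : ∀ (c : K) x, D (c • x) = c • D x) (z : m) (c : K) (r : R) :
    inducedDerivation D z (c • r) = c • inducedDerivation D z r := by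
  change D (scalar m (c • r)) z z = c • D (scalar m r) z z
  rw [show scalar m (c • r) = c • scalar m r from diagonal_smul c fun _ => r, hD, smul_apply]

theorem inducedDerivation_innerAddEntrywise (a : Matrix m m R) (δ : R →+ R) (z : m) :
    inducedDerivation (innerAddEntrywise a δ) z = δ := by
  ext r
  change innerAddEntrywise a δ (scalar m r) z z = δ r
  rw [innerAddEntrywise_scalar]
  simp

theorem exists_eq_innerAddEntrywise_inducedDerivation {D : Matrix m m R →+ Matrix m m R}
    (hD : ∀ x y, D (x * y) = D x * y + x * D y) (z : m) :
    ∃ a, D = innerAddEntrywise a (inducedDerivation D z) := by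
  obtain ⟨a, ha⟩ := exists_apply_single_eq_commutator D hD z
  have hδ := inducedDerivation_leibniz hD z
  refine ⟨a, eq_of_apply_single_eq_of_apply_scalar_eq hD (innerAddEntrywise_leibniz a hδ)
    (fun p q => ?_) (fun r => ?_)⟩
  · rw [ha, innerAddEntrywise_single a hδ]
  · rw [apply_scalar_eq_scalar_inducedDerivation hD z, innerAddEntrywise_scalar]

end CommRing

end Matrix

open Matrix

theorem derivation_on_matrix_L0_decomposition_general
    {Ω : Type*} [MeasurableSpace Ω] (μ : Measure Ω)
    (n : ℕ) (hn : 0 < n)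
    (D : Matrix (Fin n) (Fin n) (Ω →ₘ[μ] ℂ) → Matrix (Fin n) (Fin n) (Ω →ₘ[μ] ℂ))
    (Dadd : ∀ x y, D (x + y) = D x + D y)
    (Dsmul : ∀ (c : ℂ) (x), D (c • x) = c • D x)
    (Dleib : ∀ x y, D (x * y) = D x * y + x * D y) :
    ∃ (a : Matrix (Fin n) (Fin n) (Ω →ₘ[μ] ℂ))
      (δ : (Ω →ₘ[μ] ℂ) → (Ω →ₘ[μ] ℂ)),
      (∀ f g, δ (f + g) = δ f + δ g) ∧
      (∀ (c : ℂ) (f), δ (c • f) = c • δ f) ∧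
      (∀ f g, δ (f * g) = δ f * g + f * δ g) ∧
      (∀ x, D x = (a * x - x * a) + matrixEntrywise n δ x) ∧
      (∀ (a' : Matrix (Fin n) (Fin n) (Ω →ₘ[μ] ℂ))
         (δ' : (Ω →ₘ[μ] ℂ) → (Ω →ₘ[μ] ℂ)),
        (∀ f g, δ' (f + g) = δ' f + δ' g) →
        (∀ (c : ℂ) (f), δ' (c • f) = c • δ' f) →
        (∀ f g, δ' (f * g) = δ' f * g + f * δ' g) →
        (∀ x, D x = (a' * x - x * a') + matrixEntrywise n δ' x) →
        δ' = δ ∧ ∀ x, a' * x - x * a' = a * x - x * a) := by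
  let D₀ := AddMonoidHom.mk' D Dadd
  let z : Fin n := ⟨0, hn⟩
  obtain ⟨a, ha⟩ := exists_eq_innerAddEntrywise_inducedDerivation (D := D₀) Dleib z
  refine ⟨a, inducedDerivation D₀ z, map_add _,
    fun c f => inducedDerivation_smul (D := D₀) Dsmul z c f, inducedDerivation_leibniz (D := D₀) Dleib z, fun x => DFunLike.congr_fun ha x, ?_⟩
  intro a' δ' hδ'add _ _ hD'
  have ha' : D₀ = innerAddEntrywise a' (AddMonoidHom.mk' δ' hδ'add) := AddMonoidHom.ext hD'
  have hδ' : δ' = inducedDerivation D₀ z := by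
    rw [ha', inducedDerivation_innerAddEntrywise]
    rfl
  refine ⟨hδ', fun x => add_right_cancel ((hD' x).symm.trans ?_)⟩
  rw [hδ']
  exact DFunLike.congr_fun ha x

/-- every ℂ-linear derivation `D` on `M_n(L⁰(Ω))` (≅ `LS(M) = S(M)` for a
homogeneous type I_n von Neumann algebra `M` with center `L^∞(Ω)`) decomposes as
`D = D_a + D_δ` with `D_a` inner (implemented by `a ∈ M_n(L⁰(Ω))`) and `D_δ` the entrywise
derivation induced by a ℂ-linear derivation `δ` on `L⁰(Ω)`; moreover `δ` and the map `D_a`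
are uniquely determined by `D`. Here `L⁰(Ω)` is realized as the space `Ω →ₘ[μ] ℂ` of
equivalence classes of measurable functions modulo equality μ-a.e. -/
theorem derivation_on_matrix_L0_decomposition
    {Ω : Type*} [MeasurableSpace Ω] (μ : Measure Ω) [SigmaFinite μ]
    (n : ℕ) (hn : 0 < n)
    (D : Matrix (Fin n) (Fin n) (Ω →ₘ[μ] ℂ) → Matrix (Fin n) (Fin n) (Ω →ₘ[μ] ℂ))
    (Dadd : ∀ x y, D (x + y) = D x + D y)
    (Dsmul : ∀ (c : ℂ) (x), D (c • x) = c • D x)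
    (Dleib : ∀ x y, D (x * y) = D x * y + x * D y) :
    ∃ (a : Matrix (Fin n) (Fin n) (Ω →ₘ[μ] ℂ))
      (δ : (Ω →ₘ[μ] ℂ) → (Ω →ₘ[μ] ℂ)),
      (∀ f g, δ (f + g) = δ f + δ g) ∧
      (∀ (c : ℂ) (f), δ (c • f) = c • δ f) ∧
      (∀ f g, δ (f * g) = δ f * g + f * δ g) ∧
      (∀ x, D x = (a * x - x * a) + matrixEntrywise n δ x) ∧
      (∀ (a' : Matrix (Fin n) (Fin n) (Ω →ₘ[μ] ℂ))
         (δ' : (Ω →ₘ[μ] ℂ) → (Ω →ₘ[μ] ℂ)),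
        (∀ f g, δ' (f + g) = δ' f + δ' g) →
        (∀ (c : ℂ) (f), δ' (c • f) = c • δ' f) →
        (∀ f g, δ' (f * g) = δ' f * g + f * δ' g) →
        (∀ x, D x = (a' * x - x * a') + matrixEntrywise n δ' x) →
        δ' = δ ∧ ∀ x, a' * x - x * a' = a * x - x * a) :=
  derivation_on_matrix_L0_decomposition_general μ n hn D Dadd Dsmul Dleib
end

section
/- Let (Ω, Σ, μ) be a σ-finite measure space and δ a derivation on L^0(Ω). Let (A_k)_{k∈ℕ} be pairwise disjoint measurable subsets of Ω whose union is Ω, and let π_k ∈ L^0(Ω) denote the equivalence class of the indicator function of A_k. If λ ∈ L^0(Ω) and (λ_k)_{k∈ℕ} is a family in L^0(Ω) such that π_k·λ = π_k·λ_k for all k (i.e., λ = Σ_k π_k λ_k is the mixing of the family (λ_k) along the partition (π_k)), then π_k·δ(λ) = π_k·δ(λ_k) for all k (i.e., δ commutes with the mixing operation). -/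
/-!
The class `e` of an indicator function is idempotent, so `δ e = δ (e * e) = 2 e δ e`,
whence `e δ e = 0`. Therefore `e δ (e f) = e (δ e f + e δ f) = e δ f` for every `f`,
and `e λ = e λₖ` gives `e δ λ = e δ (e λ) = e δ (e λₖ) = e δ λₖ`.
-/

open MeasureTheory

namespace IsIdempotentElem

variable {R : Type*} [NonUnitalCommRing R] {D : R → R}
  (hD : ∀ a b, D (a * b) = D a * b + a * D b) {e : R}

include hD

theorem mul_map_self_eq_zero (he : IsIdempotentElem e) : e * D e = 0 := by
  have h : e * D e = e * D e + e * D e := by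
    calc e * D e = e * D (e * e) := by rw [he.eq]
      _ = e * D e + e * D e := by
        rw [hD, mul_add, mul_comm (D e) e, ← mul_assoc, he.eq]
  simpa using h

theorem mul_map_mul_left (he : IsIdempotentElem e) (a : R) : e * D (e * a) = e * D a := by
  rw [hD, mul_add, ← mul_assoc, he.mul_map_self_eq_zero hD, zero_mul, zero_add, ← mul_assoc,
    he.eq]

theorem mul_map_eq_of_mul_eq (he : IsIdempotentElem e) {a b : R} (h : e * a = e * b) :
    e * D a = e * D b := by
  rw [← he.mul_map_mul_left hD a, h, he.mul_map_mul_left hD b]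

end IsIdempotentElem

namespace MeasureTheory.AEEqFun

variable {α γ : Type*} [MeasurableSpace α] {μ : Measure α} [TopologicalSpace γ]

instance instNonUnitalCommRing [NonUnitalCommRing γ] [IsTopologicalRing γ] :
    NonUnitalCommRing (α →ₘ[μ] γ) :=
  toGerm_injective.nonUnitalCommRing toGerm zero_toGerm add_toGerm mul_toGerm neg_toGerm
    sub_toGerm (fun _ _ => smul_toGerm _ _) (fun _ _ => smul_toGerm _ _)

theorem isIdempotentElem_mk_indicator_const_one [MulZeroOneClass γ] [ContinuousMul γ]
    {s : Set α} (hs : AEStronglyMeasurable (s.indicator fun _ => (1 : γ)) μ) :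
    IsIdempotentElem (mk (s.indicator fun _ => (1 : γ)) hs : α →ₘ[μ] γ) := by
  rw [IsIdempotentElem, mk_mul_mk]
  congr 1
  funext x
  by_cases hx : x ∈ s <;> simp [hx]

end MeasureTheory.AEEqFun

theorem derivation_commutes_with_mixing_general
    {Ω : Type*} [MeasurableSpace Ω] (μ : Measure Ω)
    (δ : (Ω →ₘ[μ] ℂ) → (Ω →ₘ[μ] ℂ))
    (hleib : ∀ f g, δ (f * g) = δ f * g + f * δ g)
    (A : ℕ → Set Ω) (hAmeas : ∀ k, MeasurableSet (A k))
    (π : ℕ → (Ω →ₘ[μ] ℂ))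
    (hπ : ∀ k, π k = AEEqFun.mk ((A k).indicator fun _ => (1 : ℂ))
        (aestronglyMeasurable_const.indicator (hAmeas k)))
    (lam : Ω →ₘ[μ] ℂ) (lams : ℕ → (Ω →ₘ[μ] ℂ))
    (hmix : ∀ k, π k * lam = π k * lams k) :
    ∀ k, π k * δ lam = π k * δ (lams k) := by
  intro k
  have hπ_idem : IsIdempotentElem (π k) :=
    hπ k ▸ AEEqFun.isIdempotentElem_mk_indicator_const_one _
  exact hπ_idem.mul_map_eq_of_mul_eq hleib (hmix k)

/-- a derivation `δ` on `L⁰(Ω)` commutes with the mixing operation: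
if `(A_k)` is a measurable partition of `Ω` with indicator classes `π_k`, and
`λ` is the mixing of the family `(λ_k)` along `(π_k)` (i.e. `π_k·λ = π_k·λ_k` for
all `k`), then `π_k·δ(λ) = π_k·δ(λ_k)` for all `k`. Here `L⁰(Ω)` is realized as
the space `Ω →ₘ[μ] ℂ` of classes of measurable functions modulo equality μ-a.e. -/
theorem derivation_commutes_with_mixing
    {Ω : Type*} [MeasurableSpace Ω] (μ : Measure Ω) [SigmaFinite μ]
    (δ : (Ω →ₘ[μ] ℂ) → (Ω →ₘ[μ] ℂ))
    (hadd : ∀ f g, δ (f + g) = δ f + δ g)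
    (hsmul : ∀ (c : ℂ) (f), δ (c • f) = c • δ f)
    (hleib : ∀ f g, δ (f * g) = δ f * g + f * δ g)
    (A : ℕ → Set Ω) (hAmeas : ∀ k, MeasurableSet (A k))
    (hdisj : Pairwise (Function.onFun Disjoint A))
    (hcover : (⋃ k, A k) = Set.univ)
    (π : ℕ → (Ω →ₘ[μ] ℂ))
    (hπ : ∀ k, π k = AEEqFun.mk ((A k).indicator fun _ => (1 : ℂ))
        (aestronglyMeasurable_const.indicator (hAmeas k)))
    (lam : Ω →ₘ[μ] ℂ) (lams : ℕ → (Ω →ₘ[μ] ℂ))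
    (hmix : ∀ k, π k * lam = π k * lams k) :
    ∀ k, π k * δ lam = π k * δ (lams k) :=
  derivation_commutes_with_mixing_general μ δ hleib A hAmeas π hπ lam lams hmix
end

section
/- Let (Ω, Σ, μ) be a σ-finite measure space and δ a nonzero derivation on L^0(Ω). Then there exist a sequence (λ_n)_{n≥1} in L^0(Ω) with |λ_n| ≤ 1 μ-almost everywhere for every n, and a measurable set A ∈ Σ with μ(A) > 0, such that for every n ≥ 1 one has |δ(λ_n)(ω)| ≥ n for μ-almost every ω ∈ A. -/
/-!
Pick `f` with `δ f ≠ 0` and `ε > 0` such that `A = {ε ≤ |δ f|}` has positive measure. A derivation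
kills idempotents, hence, by locality, every measurable function with countably many values: on
the level set `{g = c}` such a `g` agrees with the constant `c`. Rounding `f` to a fine lattice
in `ℂ` gives a countably valued `Rₙ f` with `|f - Rₙ f| ≤ ε / (n + 1)`, so
`λₙ = ((n + 1) / ε) (f - Rₙ f)` satisfies `|λₙ| ≤ 1` and `δ λₙ = ((n + 1) / ε) δ f`, which is at
least `n + 1` in modulus on `A`.
-/

open MeasureTheory

theorem abs_sub_mul_floor_div_le {K : Type*} [Field K] [LinearOrder K] [IsStrictOrderedRing K]
    [FloorRing K] {s : K} (hs : 0 < s) (x : K) : |x - s * ⌊x / s⌋| ≤ s := by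
  have hfract : x - s * ⌊x / s⌋ = s * Int.fract (x / s) := by
    rw [Int.fract, mul_sub, mul_div_cancel₀ x hs.ne']
  rw [hfract, abs_of_nonneg (mul_nonneg hs.le (Int.fract_nonneg _))]
  exact mul_le_of_le_one_right hs.le (Int.fract_lt_one _).le

theorem Complex.exists_measurable_countable_range_norm_sub_le {r : ℝ} (hr : 0 < r) :
    ∃ R : ℂ → ℂ, Measurable R ∧ (Set.range R).Countable ∧ ∀ z, ‖z - R z‖ ≤ r := by
  set s := r / 2
  have hs : 0 < s := by positivity
  let grid : ℤ × ℤ → ℂ := fun p => ((s * p.1 : ℝ) : ℂ) + ((s * p.2 : ℝ) : ℂ) * I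
  refine ⟨fun z => grid (⌊z.re / s⌋, ⌊z.im / s⌋), by fun_prop,
    (Set.countable_range grid).mono (Set.range_comp_subset_range _ grid), fun z => ?_⟩
  calc ‖z - grid (⌊z.re / s⌋, ⌊z.im / s⌋)‖
      ≤ |z.re - s * ⌊z.re / s⌋| + |z.im - s * ⌊z.im / s⌋| := by
        simpa [grid] using Complex.norm_le_abs_re_add_abs_im (z - grid (⌊z.re / s⌋, ⌊z.im / s⌋))
    _ ≤ s + s := add_le_add (abs_sub_mul_floor_div_le hs _) (abs_sub_mul_floor_div_le hs _)
    _ = r := add_halves r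

namespace MeasureTheory.AEEqFun

variable {Ω : Type*} [MeasurableSpace Ω] {μ : Measure Ω}

theorem exists_pos_measure_le_norm {E : Type*} [NormedAddCommGroup E] {g : Ω →ₘ[μ] E}
    (hg : g ≠ 0) : ∃ ε > (0 : ℝ), 0 < μ {ω | ε ≤ ‖g ω‖} := by
  have hsupp : {ω | g ω ≠ 0} ⊆ ⋃ n : ℕ, {ω | 1 / ((n : ℝ) + 1) ≤ ‖g ω‖} := fun ω hω => by
    obtain ⟨n, hn⟩ := exists_nat_one_div_lt (norm_pos_iff.2 hω)
    exact Set.mem_iUnion.2 ⟨n, hn.le⟩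
  have hunion : μ (⋃ n : ℕ, {ω | 1 / ((n : ℝ) + 1) ≤ ‖g ω‖}) ≠ 0 := fun hnull =>
    hg (ext (Filter.EventuallyEq.trans (ae_iff.2 (measure_mono_null hsupp hnull)) coeFn_zero.symm))
  obtain ⟨n, hn⟩ := exists_measure_pos_of_not_measure_iUnion_null hunion
  exact ⟨_, Nat.one_div_pos_of_nat, hn⟩

theorem exists_countable_range_norm_sub_le (f : Ω →ₘ[μ] ℂ) {r : ℝ} (hr : 0 < r) :
    ∃ g : Ω → ℂ, ∃ hg : Measurable g, (Set.range g).Countable ∧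
      ∀ᵐ ω ∂μ, ‖(f - mk g hg.aestronglyMeasurable : Ω →ₘ[μ] ℂ) ω‖ ≤ r := by
  obtain ⟨R, hRm, hRrange, hR⟩ := Complex.exists_measurable_countable_range_norm_sub_le hr
  have hRf : Measurable (R ∘ f) := hRm.comp f.stronglyMeasurable.measurable
  refine ⟨R ∘ f, hRf, hRrange.mono (Set.range_comp_subset_range _ _), ?_⟩
  filter_upwards [coeFn_sub f (mk (R ∘ f) hRf.aestronglyMeasurable),
    coeFn_mk (R ∘ f) hRf.aestronglyMeasurable] with ω hsub hmk
  simpa [hsub, hmk] using hR (f ω)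

variable {R : Type*} [TopologicalSpace R] [CommRing R] [IsTopologicalRing R]

protected theorem mul_add (f g h : Ω →ₘ[μ] R) : f * (g + h) = f * g + f * h :=
  induction_on₃ f g h fun f _ g _ h _ => by simp only [mk_add_mk, mk_mul_mk, mul_add]

protected theorem mul_zero (f : Ω →ₘ[μ] R) : f * 0 = 0 :=
  left_eq_add.1 (show f * 0 = f * 0 + f * 0 by rw [← AEEqFun.mul_add, add_zero])

variable {δ : (Ω →ₘ[μ] R) → (Ω →ₘ[μ] R)}

theorem map_idempotent_eq_zero_of_leibniz (hleib : ∀ f g, δ (f * g) = δ f * g + f * δ g)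
    {e : Ω →ₘ[μ] R} (he : IsIdempotentElem e) : δ e = 0 := by
  have hδe : δ e = δ e * e + e * δ e := by rw [← hleib, he.eq]
  have hδe' : e * δ e = e * δ e + e * δ e :=
    calc e * δ e = e * (δ e * e + e * δ e) := by rw [← hδe]
      _ = e * δ e + e * δ e := by rw [AEEqFun.mul_add, mul_comm (δ e) e, ← mul_assoc, he.eq]
  rw [hδe, mul_comm (δ e) e, left_eq_add.1 hδe', add_zero]

theorem map_mul_idempotent_of_leibniz (hleib : ∀ f g, δ (f * g) = δ f * g + f * δ g)
    (f : Ω →ₘ[μ] R) {e : Ω →ₘ[μ] R} (he : IsIdempotentElem e) : δ (f * e) = δ f * e := by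
  rw [hleib, map_idempotent_eq_zero_of_leibniz hleib he, AEEqFun.mul_zero, add_zero]

theorem map_mk_eq_zero_of_countable_range {𝕜 : Type*} [RCLike 𝕜]
    {δ : (Ω →ₘ[μ] 𝕜) → (Ω →ₘ[μ] 𝕜)} (hsmul : ∀ (c : 𝕜) f, δ (c • f) = c • δ f)
    (hleib : ∀ f g, δ (f * g) = δ f * g + f * δ g) {g : Ω → 𝕜} (hg : Measurable g)
    (hrange : (Set.range g).Countable) : δ (mk g hg.aestronglyMeasurable) = 0 := by
  let ind : 𝕜 → Ω → 𝕜 := fun c => (g ⁻¹' {c}).indicator 1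
  have hind : ∀ c, AEStronglyMeasurable (ind c) μ := fun c =>
    (measurable_const.indicator (hg (measurableSet_singleton c))).aestronglyMeasurable
  have hidem : ∀ c, IsIdempotentElem (mk (ind c) (hind c)) := fun c => by
    rw [IsIdempotentElem, mk_mul_mk]
    congr 1
    ext ω
    by_cases h : g ω = c <;> simp [ind, h]
  have hlocal : ∀ c,
      mk g hg.aestronglyMeasurable * mk (ind c) (hind c) = c • mk (ind c) (hind c) := fun c => by
    rw [mk_mul_mk, smul_mk]
    congr 1
    ext ω
    by_cases h : g ω = c <;> simp [ind, h]
  have hvanish : ∀ c, δ (mk g hg.aestronglyMeasurable) * mk (ind c) (hind c) = 0 := fun c => by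
    rw [← map_mul_idempotent_of_leibniz hleib _ (hidem c), hlocal, hsmul,
      map_idempotent_eq_zero_of_leibniz hleib (hidem c)]
    exact smul_zero (A := Ω →ₘ[μ] 𝕜) c
  have hae : ∀ᵐ ω ∂μ, ∀ c ∈ Set.range g, δ (mk g hg.aestronglyMeasurable) ω * ind c ω = 0 := by
    refine (ae_ball_iff hrange).2 fun c _ => ?_
    have h0 : ⇑(δ (mk g hg.aestronglyMeasurable) * mk (ind c) (hind c)) =ᵐ[μ] 0 := by
      rw [hvanish c]; exact coeFn_zero
    filter_upwards [coeFn_mul (δ (mk g hg.aestronglyMeasurable)) (mk (ind c) (hind c)),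
      coeFn_mk (ind c) (hind c), h0] with ω h1 h2 h3
    rw [← h2, ← Pi.mul_apply, ← h1, h3, Pi.zero_apply]
  refine ext ?_
  filter_upwards [hae, coeFn_zero (β := 𝕜) (μ := μ)] with ω hω h0
  simpa [ind, h0] using hω (g ω) ⟨ω, rfl⟩

end MeasureTheory.AEEqFun

theorem nontrivial_derivation_unbounded_general
    {Ω : Type*} [MeasurableSpace Ω] (μ : Measure Ω)
    (δ : (Ω →ₘ[μ] ℂ) → (Ω →ₘ[μ] ℂ))
    (hadd : ∀ f g, δ (f + g) = δ f + δ g)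
    (hsmul : ∀ (c : ℂ) (f), δ (c • f) = c • δ f)
    (hleib : ∀ f g, δ (f * g) = δ f * g + f * δ g)
    (hne : δ ≠ 0) :
    ∃ (lam : ℕ → (Ω →ₘ[μ] ℂ)) (A : Set Ω), MeasurableSet A ∧ 0 < μ A ∧
      (∀ n : ℕ, ∀ᵐ ω ∂μ, ‖(lam n : Ω →ₘ[μ] ℂ) ω‖ ≤ 1) ∧
      (∀ n : ℕ, 1 ≤ n → ∀ᵐ ω ∂μ, ω ∈ A → (n : ℝ) ≤ ‖(δ (lam n)) ω‖) := by
  obtain ⟨f, hf⟩ : ∃ f, δ f ≠ 0 := Function.ne_iff.1 hne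
  obtain ⟨ε, hε, hA⟩ := AEEqFun.exists_pos_measure_le_norm hf
  choose g hg hgrange hfg using fun n : ℕ =>
    f.exists_countable_range_norm_sub_le (r := ε / (n + 1)) (by positivity)
  let c : ℕ → ℝ := fun n => (n + 1) / ε
  have hc : ∀ n, 0 ≤ c n := fun n => by positivity
  have hcε : ∀ n, c n * ε = n + 1 := fun n => div_mul_cancel₀ _ hε.ne'
  let lam : ℕ → Ω →ₘ[μ] ℂ := fun n => (c n : ℂ) • (f - AEEqFun.mk (g n) (hg n).aestronglyMeasurable)
  have hδsub : ∀ a b, δ (a - b) = δ a - δ b := (AddMonoidHom.mk' δ hadd).map_sub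
  have hδlam : ∀ n, δ (lam n) = (c n : ℂ) • δ f := fun n => by
    rw [hsmul, hδsub, AEEqFun.map_mk_eq_zero_of_countable_range hsmul hleib (hg n) (hgrange n),
      sub_zero]
  refine ⟨lam, _, measurableSet_le measurable_const (δ f).stronglyMeasurable.measurable.norm, hA,
    fun n => ?_, fun n _ => ?_⟩
  · filter_upwards [AEEqFun.coeFn_smul (c n : ℂ) (f - AEEqFun.mk (g n) _), hfg n] with ω hω hfgω
    calc ‖lam n ω‖ ≤ c n * (ε / (n + 1)) := by
          simpa [lam, hω, abs_of_nonneg (hc n)] using mul_le_mul_of_nonneg_left hfgω (hc n)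
      _ = 1 := by rw [← mul_div_assoc, hcε, div_self (by positivity)]
  · rw [hδlam]
    filter_upwards [AEEqFun.coeFn_smul (c n : ℂ) (δ f)] with ω hω hωA
    calc (n : ℝ) ≤ c n * ε := by rw [hcε]; linarith
      _ ≤ c n * ‖δ f ω‖ := mul_le_mul_of_nonneg_left hωA (hc n)
      _ = ‖((c n : ℂ) • δ f) ω‖ := by simp [hω, abs_of_nonneg (hc n)]

/-- for a nonzero derivation `δ` on `L⁰(Ω)` there exist a sequence
`(λ_n)` with `|λ_n| ≤ 1` a.e. for every `n`, and a measurable set `A` of positive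
measure, such that `|δ(λ_n)| ≥ n` a.e. on `A` for all `n ≥ 1`. Here `L⁰(Ω)` is
realized as the space `Ω →ₘ[μ] ℂ` of classes of measurable functions modulo
equality μ-a.e. -/
theorem nontrivial_derivation_unbounded
    {Ω : Type*} [MeasurableSpace Ω] (μ : Measure Ω) [SigmaFinite μ]
    (δ : (Ω →ₘ[μ] ℂ) → (Ω →ₘ[μ] ℂ))
    (hadd : ∀ f g, δ (f + g) = δ f + δ g)
    (hsmul : ∀ (c : ℂ) (f), δ (c • f) = c • δ f)
    (hleib : ∀ f g, δ (f * g) = δ f * g + f * δ g)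
    (hne : δ ≠ 0) :
    ∃ (lam : ℕ → (Ω →ₘ[μ] ℂ)) (A : Set Ω), MeasurableSet A ∧ 0 < μ A ∧
      (∀ n : ℕ, ∀ᵐ ω ∂μ, ‖(lam n : Ω →ₘ[μ] ℂ) ω‖ ≤ 1) ∧
      (∀ n : ℕ, 1 ≤ n → ∀ᵐ ω ∂μ, ω ∈ A → (n : ℝ) ≤ ‖(δ (lam n)) ω‖) :=
  nontrivial_derivation_unbounded_general μ δ hadd hsmul hleib hne
end

section
/- Let (Ω, Σ, μ) be a σ-finite measure space and δ a derivation on L^0(Ω). If the set {δ(λ) : λ ∈ L^0(Ω), |λ| ≤ 1 μ-a.e.} is order bounded in L^0(Ω), i.e., there exists g ∈ L^0(Ω) such that |δ(λ)| ≤ g μ-almost everywhere for every λ ∈ L^0(Ω) with |λ| ≤ 1 μ-almost everywhere, then δ is identically zero. -/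
/-!
Constants are killed by any derivation, and the order bound forces `δ u = 0` for every
unimodular `u`: `δ (u ^ (n + 1)) = (n + 1) u ^ n δ u` has modulus `(n + 1) |δ u| ≤ g` for all `n`.
A real-valued `h` is recovered from its Cayley transform `u = (h - i) / (h + i)`, which is
unimodular, through `u (h + i) = h - i`. Differentiating this identity gives `δ h = u δ h`, and
`u ≠ 1` pointwise, so `δ h = 0`. Finally every `f` is `Re f + i Im f`.
-/

open MeasureTheory

namespace Complex

lemma ofReal_add_I_ne_zero (x : ℝ) : (x : ℂ) + I ≠ 0 := fun h => by
  simpa using congrArg im h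

noncomputable def cayley (x : ℝ) : ℂ := (x - I) / (x + I)

lemma continuous_cayley : Continuous cayley :=
  (continuous_ofReal.sub continuous_const).div (continuous_ofReal.add continuous_const)
    ofReal_add_I_ne_zero

lemma norm_cayley (x : ℝ) : ‖cayley x‖ = 1 := by
  rw [cayley, norm_div, div_eq_one_iff_eq (norm_ne_zero_iff.2 (ofReal_add_I_ne_zero x)),
    ← norm_conj]
  simp [sub_eq_add_neg]

lemma cayley_ne_one (x : ℝ) : cayley x ≠ 1 := by
  rw [cayley, Ne, div_eq_one_iff_eq (ofReal_add_I_ne_zero x)]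
  intro h
  have := congrArg im h
  norm_num at this

lemma cayley_mul_ofReal_add_I (x : ℝ) : cayley x * (x + I) = x - I :=
  div_mul_cancel₀ _ (ofReal_add_I_ne_zero x)

end Complex

lemma eq_zero_of_forall_nat_succ_mul_le {a b : ℝ} (ha : 0 ≤ a)
    (h : ∀ n : ℕ, ((n : ℝ) + 1) * a ≤ b) : a = 0 := by
  refine ha.antisymm' (not_lt.1 fun hpos => ?_)
  obtain ⟨n, hn⟩ := exists_nat_gt (b / a)
  rw [div_lt_iff₀ hpos] at hn
  nlinarith [h n]

namespace MeasureTheory.AEEqFun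

open Complex

variable {Ω : Type*} [MeasurableSpace Ω] {μ : Measure Ω}

lemma comp_re_add_I_smul_comp_im (f : Ω →ₘ[μ] ℂ) :
    (f.comp re continuous_re).comp ofReal continuous_ofReal
      + I • (f.comp im continuous_im).comp ofReal continuous_ofReal = f := by
  ext
  filter_upwards [coeFn_add ((f.comp re continuous_re).comp ofReal continuous_ofReal)
      (I • (f.comp im continuous_im).comp ofReal continuous_ofReal),
    coeFn_smul I ((f.comp im continuous_im).comp ofReal continuous_ofReal),
    coeFn_comp _ continuous_ofReal (f.comp re continuous_re), coeFn_comp re continuous_re f,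
    coeFn_comp _ continuous_ofReal (f.comp im continuous_im), coeFn_comp im continuous_im f]
    with ω h h₁ h₂ h₃ h₄ h₅
  simp only [h, Pi.add_apply, h₁, Pi.smul_apply, h₂, h₄, Function.comp_apply, h₃, h₅,
    smul_eq_mul, mul_comm I]
  exact re_add_im _

lemma comp_cayley_mul (r : Ω →ₘ[μ] ℝ) :
    r.comp cayley continuous_cayley * (r.comp ofReal continuous_ofReal + I • 1)
      = r.comp ofReal continuous_ofReal + (-I) • 1 := by
  ext
  filter_upwards [coeFn_mul (r.comp cayley continuous_cayley)
      (r.comp ofReal continuous_ofReal + I • 1),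
    coeFn_add (r.comp ofReal continuous_ofReal) (I • 1),
    coeFn_add (r.comp ofReal continuous_ofReal) ((-I) • 1),
    coeFn_smul I (1 : Ω →ₘ[μ] ℂ), coeFn_smul (-I) (1 : Ω →ₘ[μ] ℂ), coeFn_one (β := ℂ) (μ := μ),
    coeFn_comp cayley continuous_cayley r, coeFn_comp ofReal continuous_ofReal r]
    with ω h₁ h₂ h₃ h₄ h₅ h₆ h₇ h₈
  simp only [h₁, h₂, h₃, h₄, h₅, h₆, h₇, h₈, Pi.mul_apply, Pi.add_apply, Pi.smul_apply,
    Pi.one_apply, Function.comp_apply, smul_eq_mul, mul_one, cayley_mul_ofReal_add_I]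
  ring

variable {δ : (Ω →ₘ[μ] ℂ) → (Ω →ₘ[μ] ℂ)}

lemma map_one_eq_zero_of_leibniz (hleib : ∀ f g, δ (f * g) = δ f * g + f * δ g) : δ 1 = 0 := by
  have h := hleib 1 1
  rw [mul_one, mul_one, one_mul] at h
  exact left_eq_add.mp h

lemma map_add_smul_one_of_leibniz (hadd : ∀ f g, δ (f + g) = δ f + δ g)
    (hsmul : ∀ (c : ℂ) (f), δ (c • f) = c • δ f) (hleib : ∀ f g, δ (f * g) = δ f * g + f * δ g)
    (f : Ω →ₘ[μ] ℂ) (c : ℂ) : δ (f + c • 1) = δ f := by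
  -- `rw [smul_zero]` does not fire: this `•` is `AEEqFun.instSMul`, not the `Module` action.
  rw [hadd, hsmul, map_one_eq_zero_of_leibniz hleib, (smul_zero (A := Ω →ₘ[μ] ℂ) c :),
    add_zero]

lemma ae_map_mul_of_leibniz (hleib : ∀ f g, δ (f * g) = δ f * g + f * δ g)
    (f g : Ω →ₘ[μ] ℂ) : ∀ᵐ ω ∂μ, δ (f * g) ω = δ f ω * g ω + f ω * δ g ω := by
  rw [hleib]
  filter_upwards [coeFn_add (δ f * g) (f * δ g), coeFn_mul (δ f) g, coeFn_mul f (δ g)]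
    with ω h h₁ h₂
  rw [h, Pi.add_apply, h₁, h₂, Pi.mul_apply, Pi.mul_apply]

lemma ae_map_pow_succ_of_leibniz (hleib : ∀ f g, δ (f * g) = δ f * g + f * δ g)
    (f : Ω →ₘ[μ] ℂ) (n : ℕ) : ∀ᵐ ω ∂μ, δ (f ^ (n + 1)) ω = (n + 1) * f ω ^ n * δ f ω := by
  induction n with
  | zero => simp
  | succ n ih =>
    rw [pow_succ]
    filter_upwards [ae_map_mul_of_leibniz hleib (f ^ (n + 1)) f, ih, coeFn_pow f (n + 1)]
      with ω h h₁ h₂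
    rw [h, h₁, h₂, Pi.pow_apply]
    push_cast
    ring

lemma map_eq_zero_of_norm_eq_one (hleib : ∀ f g, δ (f * g) = δ f * g + f * δ g)
    {g : Ω →ₘ[μ] ℝ}
    (hg : ∀ lam : Ω →ₘ[μ] ℂ, (∀ᵐ ω ∂μ, ‖lam ω‖ ≤ 1) → ∀ᵐ ω ∂μ, ‖(δ lam) ω‖ ≤ g ω)
    {u : Ω →ₘ[μ] ℂ} (hu : ∀ᵐ ω ∂μ, ‖u ω‖ = 1) : δ u = 0 := by
  have hpow (n : ℕ) : ∀ᵐ ω ∂μ, ((n : ℝ) + 1) * ‖δ u ω‖ ≤ g ω := by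
    have hball : ∀ᵐ ω ∂μ, ‖(u ^ (n + 1)) ω‖ ≤ 1 := by
      filter_upwards [coeFn_pow u (n + 1), hu] with ω h h₁
      rw [h, Pi.pow_apply, norm_pow, h₁, one_pow]
    filter_upwards [hg _ hball, ae_map_pow_succ_of_leibniz hleib u n, hu] with ω hle h h₁
    rwa [h, norm_mul, norm_mul, norm_pow, h₁, one_pow, mul_one,
      show ((n : ℂ) + 1) = ((n + 1 : ℝ) : ℂ) by push_cast; rfl, norm_real,
      Real.norm_of_nonneg (by positivity)] at hle
  ext
  filter_upwards [ae_all_iff.2 hpow, coeFn_zero (β := ℂ) (μ := μ)] with ω h h₀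
  rw [h₀]
  exact norm_eq_zero.1 (eq_zero_of_forall_nat_succ_mul_le (norm_nonneg _) h)

lemma map_comp_ofReal_eq_zero (hadd : ∀ f g, δ (f + g) = δ f + δ g)
    (hsmul : ∀ (c : ℂ) (f), δ (c • f) = c • δ f) (hleib : ∀ f g, δ (f * g) = δ f * g + f * δ g)
    {g : Ω →ₘ[μ] ℝ}
    (hg : ∀ lam : Ω →ₘ[μ] ℂ, (∀ᵐ ω ∂μ, ‖lam ω‖ ≤ 1) → ∀ᵐ ω ∂μ, ‖(δ lam) ω‖ ≤ g ω)
    (r : Ω →ₘ[μ] ℝ) : δ (r.comp ofReal continuous_ofReal) = 0 := by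
  set h := r.comp ofReal continuous_ofReal
  set u := r.comp cayley continuous_cayley
  have hu_coe : ⇑u =ᵐ[μ] fun ω => cayley (r ω) := coeFn_comp cayley continuous_cayley r
  have hu : δ u = 0 := map_eq_zero_of_norm_eq_one hleib hg <| by
    filter_upwards [hu_coe] with ω hω
    rw [hω, norm_cayley]
  have hfixed := ae_map_mul_of_leibniz hleib u (h + I • 1)
  rw [comp_cayley_mul, map_add_smul_one_of_leibniz hadd hsmul hleib,
    map_add_smul_one_of_leibniz hadd hsmul hleib, hu] at hfixed
  ext
  filter_upwards [hfixed, coeFn_zero (β := ℂ) (μ := μ), hu_coe] with ω hω h₀ huω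
  rw [h₀, Pi.zero_apply, zero_mul, zero_add] at hω
  have hsub : (1 - u ω) * δ h ω = 0 := by linear_combination hω
  rw [h₀, Pi.zero_apply]
  refine (mul_eq_zero.1 hsub).resolve_left (sub_ne_zero.2 ?_)
  rw [huω]
  exact (cayley_ne_one _).symm

end MeasureTheory.AEEqFun

theorem derivation_order_bounded_on_ball_eq_zero_general
    {Ω : Type*} [MeasurableSpace Ω] (μ : Measure Ω)
    (δ : (Ω →ₘ[μ] ℂ) → (Ω →ₘ[μ] ℂ))
    (hadd : ∀ f g, δ (f + g) = δ f + δ g)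
    (hsmul : ∀ (c : ℂ) (f), δ (c • f) = c • δ f)
    (hleib : ∀ f g, δ (f * g) = δ f * g + f * δ g)
    (hbound : ∃ g : Ω →ₘ[μ] ℝ, ∀ lam : Ω →ₘ[μ] ℂ,
      (∀ᵐ ω ∂μ, ‖lam ω‖ ≤ 1) → ∀ᵐ ω ∂μ, ‖(δ lam) ω‖ ≤ g ω) :
    δ = 0 := by
  obtain ⟨g, hg⟩ := hbound
  funext f
  rw [← AEEqFun.comp_re_add_I_smul_comp_im f, hadd, hsmul,
    AEEqFun.map_comp_ofReal_eq_zero hadd hsmul hleib hg,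
    AEEqFun.map_comp_ofReal_eq_zero hadd hsmul hleib hg,
    (smul_zero (A := Ω →ₘ[μ] ℂ) Complex.I :), add_zero]
  rfl

/-- if the image under a derivation `δ` on `L⁰(Ω)` of the unit ball
`{λ : |λ| ≤ 1 a.e.}` is order bounded (i.e. dominated a.e. by a fixed `g ∈ L⁰(Ω, ℝ)`),
then `δ = 0`. Here `L⁰(Ω)` is realized as the space `Ω →ₘ[μ] ℂ` of classes of
measurable functions modulo equality μ-a.e. -/
theorem derivation_order_bounded_on_ball_eq_zero
    {Ω : Type*} [MeasurableSpace Ω] (μ : Measure Ω) [SigmaFinite μ]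
    (δ : (Ω →ₘ[μ] ℂ) → (Ω →ₘ[μ] ℂ))
    (hadd : ∀ f g, δ (f + g) = δ f + δ g)
    (hsmul : ∀ (c : ℂ) (f), δ (c • f) = c • δ f)
    (hleib : ∀ f g, δ (f * g) = δ f * g + f * δ g)
    (hbound : ∃ g : Ω →ₘ[μ] ℝ, ∀ lam : Ω →ₘ[μ] ℂ,
      (∀ᵐ ω ∂μ, ‖lam ω‖ ≤ 1) → ∀ᵐ ω ∂μ, ‖(δ lam) ω‖ ≤ g ω) :
    δ = 0 :=
  derivation_order_bounded_on_ball_eq_zero_general μ δ hadd hsmul hleib hbound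
end

section
/- Let (Ω, Σ, μ) be a σ-finite measure space and δ a derivation on L^0(Ω). If δ(λ) = 0 for every essentially bounded element λ ∈ L^0(Ω) (i.e., every λ admitting a μ-essentially bounded representative), then δ = 0 on all of L^0(Ω). -/
/-!
Truncate `f` by the indicators `eₙ` of `{‖f‖ ≤ n}`. Both `eₙ` and `f * eₙ` are bounded, so the
Leibniz rule gives `0 = δ (f * eₙ) = δ f * eₙ + f * δ eₙ = δ f * eₙ`. Since `eₙ → 1` pointwise
(indeed `eₙ ω = 1` as soon as `n ≥ ‖f ω‖`), `δ f = 0` almost everywhere.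
-/

open MeasureTheory Metric

namespace MeasureTheory.AEEqFun

variable {α R : Type*} [MeasurableSpace α] {μ : Measure α}

theorem mul_zero_eq [TopologicalSpace R] [MulZeroClass R] [ContinuousMul R] (f : α →ₘ[μ] R) :
    f * 0 = 0 :=
  induction_on f fun g hg => by
    rw [zero_def, mk_mul_mk]
    exact mk_eq_mk.2 (.of_forall fun _ => mul_zero _)

variable [NormedRing R] [SecondCountableTopology R] [MeasurableSpace R] [BorelSpace R]

noncomputable def normLeIndicator (f : α →ₘ[μ] R) (r : ℝ) : α →ₘ[μ] R :=
  f.compMeasurable ((closedBall 0 r).indicator 1)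
    (measurable_one.indicator measurableSet_closedBall)

theorem coeFn_normLeIndicator (f : α →ₘ[μ] R) (r : ℝ) :
    f.normLeIndicator r =ᵐ[μ] fun ω => (closedBall 0 r).indicator 1 (f ω) :=
  coeFn_compMeasurable _ _ f

theorem ae_norm_normLeIndicator_le (f : α →ₘ[μ] R) (r : ℝ) :
    ∀ᵐ ω ∂μ, ‖f.normLeIndicator r ω‖ ≤ ‖(1 : R)‖ := by
  filter_upwards [coeFn_normLeIndicator f r] with ω hω
  rw [hω]
  by_cases h : f ω ∈ closedBall 0 r <;> simp [h]

theorem ae_norm_mul_normLeIndicator_le (f : α →ₘ[μ] R) {r : ℝ} (hr : 0 ≤ r) :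
    ∀ᵐ ω ∂μ, ‖(f * f.normLeIndicator r) ω‖ ≤ r := by
  filter_upwards [coeFn_mul f (f.normLeIndicator r), coeFn_normLeIndicator f r] with ω hmul hind
  rw [hmul, Pi.mul_apply, hind]
  by_cases h : f ω ∈ closedBall 0 r
  · simpa [h] using mem_closedBall_zero_iff.1 h
  · simpa [h] using hr

theorem eq_zero_of_forall_mul_normLeIndicator_eq_zero (f g : α →ₘ[μ] R)
    (h : ∀ n : ℕ, g * f.normLeIndicator n = 0) : g = 0 := by
  have hmul : ∀ᵐ ω ∂μ, ∀ n : ℕ, g ω * (closedBall 0 n).indicator 1 (f ω) = 0 := by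
    refine ae_all_iff.2 fun n => ?_
    have hzero : ⇑(g * f.normLeIndicator n) =ᵐ[μ] 0 := by rw [h n]; exact coeFn_zero
    filter_upwards [coeFn_mul g (f.normLeIndicator n), coeFn_normLeIndicator f n, hzero]
      with ω hgf hind hzero
    rw [← hind, ← Pi.mul_apply, ← hgf, hzero, Pi.zero_apply]
  refine ext (Filter.EventuallyEq.trans ?_ coeFn_zero.symm)
  filter_upwards [hmul] with ω hω
  obtain ⟨n, hn⟩ := exists_nat_ge ‖f ω‖
  simpa [hn] using hω n

end MeasureTheory.AEEqFun

open AEEqFun in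
theorem derivation_vanishing_on_bounded_eq_zero_general
    {Ω : Type*} [MeasurableSpace Ω] (μ : Measure Ω)
    (δ : (Ω →ₘ[μ] ℂ) → (Ω →ₘ[μ] ℂ))
    (hleib : ∀ f g, δ (f * g) = δ f * g + f * δ g)
    (hbdd : ∀ lam : Ω →ₘ[μ] ℂ, (∃ C : ℝ, ∀ᵐ ω ∂μ, ‖lam ω‖ ≤ C) → δ lam = 0) :
    δ = 0 := by
  funext f
  refine eq_zero_of_forall_mul_normLeIndicator_eq_zero f (δ f) fun n => ?_
  have h := hleib f (f.normLeIndicator n)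
  rwa [hbdd _ ⟨n, ae_norm_mul_normLeIndicator_le f n.cast_nonneg⟩,
    hbdd _ ⟨_, ae_norm_normLeIndicator_le f n⟩, mul_zero_eq, add_zero, eq_comm] at h

/-- if a derivation `δ` on `L⁰(Ω)` vanishes on every essentially
bounded element, then `δ = 0` on all of `L⁰(Ω)`. Here `L⁰(Ω)` is realized as the
space `Ω →ₘ[μ] ℂ` of classes of measurable functions modulo equality μ-a.e. -/
theorem derivation_vanishing_on_bounded_eq_zero
    {Ω : Type*} [MeasurableSpace Ω] (μ : Measure Ω) [SigmaFinite μ]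
    (δ : (Ω →ₘ[μ] ℂ) → (Ω →ₘ[μ] ℂ))
    (hadd : ∀ f g, δ (f + g) = δ f + δ g)
    (hsmul : ∀ (c : ℂ) (f), δ (c • f) = c • δ f)
    (hleib : ∀ f g, δ (f * g) = δ f * g + f * δ g)
    (hbdd : ∀ lam : Ω →ₘ[μ] ℂ, (∃ C : ℝ, ∀ᵐ ω ∂μ, ‖lam ω‖ ≤ C) → δ lam = 0) :
    δ = 0 :=
  derivation_vanishing_on_bounded_eq_zero_general μ δ hleib hbdd
end
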